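/- Let A be a commutative ring with identity with sr(A) = 1. Then every matrix in E_n(A), n ≥ 2, is a product of at most 4 matrices each of which is triangular (upper or lower) with 1's along the diagonal. -/

import Mathlib

open scoped BigOperators

/-- A tuple is unimodular if some combination of its entries equals 1. -/
def Unimodular {A : Type*} [CommRing A] {n : ℕ} (a : Fin n → A) : Prop :=
  ∃ b : Fin n → A, ∑ i, b i * a i = 1

/-- A unimodular `(n+1)`-tuple is reducible if adding multiples of the last entry
to the first `n` entries yields a unimodular `n`-tuple. -/
def Reducible {A : Type*} [CommRing A] {n : ℕ} (a : Fin (n + 1) → A) : Prop :=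
  ∃ c : Fin n → A,
    Unimodular (fun i : Fin n => a i.castSucc + c i * a (Fin.last n))

/-- `srLE A n` : the Bass stable rank of `A` is at most `n`, i.e. every
unimodular `(n+1)`-tuple is reducible. -/
def srLE (A : Type*) [CommRing A] (n : ℕ) : Prop :=
  ∀ a : Fin (n + 1) → A, Unimodular a → Reducible a

/-- The Bass stable rank of `A`, as an extended natural number
(`⊤` if no `n` works). -/
noncomputable def sr (A : Type*) [CommRing A] : ℕ∞ :=
  sInf {c : ℕ∞ | ∃ n : ℕ, c = (n : ℕ∞) ∧ srLE A n}

/-- An elementary matrix: differs from the identity in at most one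
off-diagonal entry. -/
def IsElementary {A : Type*} [CommRing A] {n : ℕ}
    (E : Matrix (Fin n) (Fin n) A) : Prop :=
  ∃ i j : Fin n, ∃ a : A, i ≠ j ∧ E = 1 + Matrix.single i j a

/-- The set of products of elementary matrices; since the inverse of an
elementary matrix is elementary, this is the group `E_n(A)`. -/
def ElemSubgroup (A : Type*) [CommRing A] (n : ℕ) :
    Submonoid (Matrix (Fin n) (Fin n) A) :=
  Submonoid.closure {E | IsElementary E}

/-- Upper triangular with `1` along the diagonal. -/
def UnipUpper {A : Type*} [CommRing A] {n : ℕ}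
    (M : Matrix (Fin n) (Fin n) A) : Prop :=
  (∀ i j : Fin n, j < i → M i j = 0) ∧ ∀ i, M i i = 1

/-- Lower triangular with `1` along the diagonal. -/
def UnipLower {A : Type*} [CommRing A] {n : ℕ}
    (M : Matrix (Fin n) (Fin n) A) : Prop :=
  (∀ i j : Fin n, i < j → M i j = 0) ∧ ∀ i, M i i = 1

/-- Triangular (upper or lower) with `1` along the diagonal. -/
def UnipTriangular {A : Type*} [CommRing A] {n : ℕ}
    (M : Matrix (Fin n) (Fin n) A) : Prop :=
  UnipUpper M ∨ UnipLower M

/-!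
When `sr A ≤ 1`, every matrix of determinant one is a product `L₁ U₁ L₂ U₂` of lower and upper
unipotent matrices; this is proved by induction on the size. The first column of
`M ∈ SL_{m+1}(A)` is unimodular, so stable rank one gives a lower unipotent row operation making
the entry `(m, 0)` a unit, after which an upper unipotent column operation puts `1` in the corner
`(m, m)`. A matrix with corner `1` factors, via its Schur complement `N ∈ SL_m(A)`, as
`lastColUnip w * diag(N, 1) * lastRowUnip t` (here `diag(N, 1) = embedTopLeft N`). Writing
`N = L₁ U₁ L₂ U₂`, conjugation by `diag(L₁, 1)` preserves the shape of `lastColUnip w`, so it moves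
past `diag(L₁, 1)` and is absorbed into `diag(U₁, 1)`; symmetrically `lastRowUnip t` moves past
`diag(U₂, 1)` into `diag(L₂, 1)`. Elementary matrices have determinant one, so this covers `E_n(A)`.
-/

open Matrix

section

variable {A : Type*} [CommRing A] {m : ℕ}

theorem Matrix.BlockTriangular.mul_apply_self {ι α R : Type*} [Fintype ι] [LinearOrder α]
    [NonUnitalNonAssocSemiring R] {M N : Matrix ι ι R} {b : ι → α} (hb : Function.Injective b)
    (hM : M.BlockTriangular b) (hN : N.BlockTriangular b) (i : ι) :
    (M * N) i i = M i i * N i i := by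
  rw [mul_apply]
  refine Finset.sum_eq_single i (fun k _ hki => ?_) (by simp)
  rcases (hb.ne hki).lt_or_gt with h | h
  · rw [hM h, zero_mul]
  · rw [hN h, mul_zero]

theorem UnipUpper.isUpperTriangular {M : Matrix (Fin m) (Fin m) A} (h : UnipUpper M) :
    M.IsUpperTriangular :=
  fun i j hij => h.1 i j hij

theorem UnipLower.isLowerTriangular {M : Matrix (Fin m) (Fin m) A} (h : UnipLower M) :
    M.IsLowerTriangular :=
  fun i j hij => h.1 i j hij

theorem UnipUpper.mul {M N : Matrix (Fin m) (Fin m) A} (hM : UnipUpper M) (hN : UnipUpper N) :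
    UnipUpper (M * N) :=
  ⟨fun _ _ hij => hM.isUpperTriangular.mul hN.isUpperTriangular hij, fun i => by
    rw [BlockTriangular.mul_apply_self Function.injective_id hM.isUpperTriangular
      hN.isUpperTriangular, hM.2, hN.2, one_mul]⟩

theorem UnipLower.mul {M N : Matrix (Fin m) (Fin m) A} (hM : UnipLower M) (hN : UnipLower N) :
    UnipLower (M * N) :=
  ⟨fun _ _ hij => hM.isLowerTriangular.mul hN.isLowerTriangular hij, fun i => by
    rw [BlockTriangular.mul_apply_self OrderDual.toDual.injective hM.isLowerTriangular
      hN.isLowerTriangular, hM.2, hN.2, one_mul]⟩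

theorem UnipUpper.det_eq_one {M : Matrix (Fin m) (Fin m) A} (h : UnipUpper M) : M.det = 1 := by
  simp [det_of_isUpperTriangular h.isUpperTriangular, h.2]

theorem UnipLower.det_eq_one {M : Matrix (Fin m) (Fin m) A} (h : UnipLower M) : M.det = 1 := by
  simp [det_of_isLowerTriangular M h.isLowerTriangular, h.2]

def embedTopLeft (X : Matrix (Fin m) (Fin m) A) : Matrix (Fin (m + 1)) (Fin (m + 1)) A :=
  Matrix.of fun i j =>
    Fin.lastCases (Fin.lastCases 1 (fun _ => 0) j) (fun i' => Fin.lastCases 0 (X i') j) i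

def lastColUnip (u : Fin (m + 1) → A) : Matrix (Fin (m + 1)) (Fin (m + 1)) A :=
  1 + vecMulVec u (Pi.single (Fin.last m) 1)

def lastRowUnip (t : Fin (m + 1) → A) : Matrix (Fin (m + 1)) (Fin (m + 1)) A :=
  1 + vecMulVec (Pi.single (Fin.last m) 1) t

@[simp] theorem embedTopLeft_last_last (X : Matrix (Fin m) (Fin m) A) :
    embedTopLeft X (Fin.last m) (Fin.last m) = 1 := by simp [embedTopLeft]

@[simp] theorem embedTopLeft_last_castSucc (X : Matrix (Fin m) (Fin m) A) (j : Fin m) :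
    embedTopLeft X (Fin.last m) j.castSucc = 0 := by simp [embedTopLeft]

@[simp] theorem embedTopLeft_castSucc_last (X : Matrix (Fin m) (Fin m) A) (i : Fin m) :
    embedTopLeft X i.castSucc (Fin.last m) = 0 := by simp [embedTopLeft]

@[simp] theorem embedTopLeft_castSucc_castSucc (X : Matrix (Fin m) (Fin m) A) (i j : Fin m) :
    embedTopLeft X i.castSucc j.castSucc = X i j := by simp [embedTopLeft]

theorem embedTopLeft_mul (X Y : Matrix (Fin m) (Fin m) A) :
    embedTopLeft (X * Y) = embedTopLeft X * embedTopLeft Y := by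
  ext i j
  induction i using Fin.lastCases <;> induction j using Fin.lastCases <;>
    simp [mul_apply, Fin.sum_univ_castSucc]

theorem det_embedTopLeft (X : Matrix (Fin m) (Fin m) A) : (embedTopLeft X).det = X.det := by
  have hminor : (embedTopLeft X).submatrix Fin.castSucc Fin.castSucc = X := by
    ext; simp
  rw [det_succ_row _ (Fin.last m), Fin.sum_univ_castSucc]
  simp [hminor]

theorem UnipUpper.embedTopLeft {X : Matrix (Fin m) (Fin m) A} (h : UnipUpper X) :
    UnipUpper (embedTopLeft X) := by
  refine ⟨fun i j hij => ?_, fun i => ?_⟩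
  · induction j using Fin.lastCases with
    | last => exact absurd hij (Fin.le_last i).not_gt
    | cast j =>
      induction i using Fin.lastCases with
      | last => simp
      | cast i => simpa using h.1 i j (Fin.castSucc_lt_castSucc_iff.mp hij)
  · induction i using Fin.lastCases <;> simp [h.2]

theorem UnipLower.embedTopLeft {X : Matrix (Fin m) (Fin m) A} (h : UnipLower X) :
    UnipLower (embedTopLeft X) := by
  refine ⟨fun i j hij => ?_, fun i => ?_⟩
  · induction i using Fin.lastCases with
    | last => exact absurd hij (Fin.le_last j).not_gt
    | cast i =>
      induction j using Fin.lastCases with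
      | last => simp
      | cast j => simpa using h.1 i j (Fin.castSucc_lt_castSucc_iff.mp hij)
  · induction i using Fin.lastCases <;> simp [h.2]

@[simp] theorem mulVec_embedTopLeft_last (X : Matrix (Fin m) (Fin m) A) (x : Fin (m + 1) → A) :
    (embedTopLeft X *ᵥ x) (Fin.last m) = x (Fin.last m) := by
  simp [mulVec, dotProduct, Fin.sum_univ_castSucc]

@[simp] theorem vecMul_embedTopLeft_last (X : Matrix (Fin m) (Fin m) A) (x : Fin (m + 1) → A) :
    (x ᵥ* embedTopLeft X) (Fin.last m) = x (Fin.last m) := by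
  simp [vecMul, dotProduct, Fin.sum_univ_castSucc]

theorem single_last_vecMul_embedTopLeft (X : Matrix (Fin m) (Fin m) A) :
    Pi.single (Fin.last m) 1 ᵥ* embedTopLeft X = Pi.single (Fin.last m) 1 := by
  ext j
  induction j using Fin.lastCases <;> simp [single_vecMul]

theorem embedTopLeft_mulVec_single_last (X : Matrix (Fin m) (Fin m) A) :
    embedTopLeft X *ᵥ Pi.single (Fin.last m) 1 = Pi.single (Fin.last m) 1 := by
  ext i
  induction i using Fin.lastCases <;> simp [mulVec_single]

@[simp] theorem lastColUnip_zero : lastColUnip (0 : Fin (m + 1) → A) = 1 := by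
  simp [lastColUnip]

@[simp] theorem lastRowUnip_zero : lastRowUnip (0 : Fin (m + 1) → A) = 1 := by
  simp [lastRowUnip]

theorem unipUpper_lastColUnip {u : Fin (m + 1) → A} (hu : u (Fin.last m) = 0) :
    UnipUpper (lastColUnip u) := by
  refine ⟨fun i j hij => ?_, fun i => ?_⟩
  · have hj : j ≠ Fin.last m := (hij.trans_le (Fin.le_last i)).ne
    simp [lastColUnip, vecMulVec_apply, one_apply_ne hij.ne', hj]
  · by_cases hi : i = Fin.last m <;> simp [lastColUnip, vecMulVec_apply, hi, hu]

theorem unipLower_lastRowUnip {t : Fin (m + 1) → A} (ht : t (Fin.last m) = 0) :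
    UnipLower (lastRowUnip t) := by
  refine ⟨fun i j hij => ?_, fun i => ?_⟩
  · have hi : i ≠ Fin.last m := (hij.trans_le (Fin.le_last j)).ne
    simp [lastRowUnip, vecMulVec_apply, one_apply_ne hij.ne, hi]
  · by_cases hi : i = Fin.last m <;> simp [lastRowUnip, vecMulVec_apply, hi, ht]

theorem lastColUnip_mul_lastColUnip (u : Fin (m + 1) → A) {v : Fin (m + 1) → A}
    (hv : v (Fin.last m) = 0) : lastColUnip u * lastColUnip v = lastColUnip (u + v) := by
  simp only [lastColUnip, mul_add, add_mul, one_mul, mul_one, vecMulVec_mul_vecMulVec,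
    single_dotProduct, hv, mul_zero, zero_smul, vecMulVec_zero, add_vecMulVec]
  abel

theorem lastRowUnip_mul_lastRowUnip {s : Fin (m + 1) → A} (hs : s (Fin.last m) = 0)
    (t : Fin (m + 1) → A) : lastRowUnip s * lastRowUnip t = lastRowUnip (s + t) := by
  simp only [lastRowUnip, mul_add, add_mul, one_mul, mul_one, vecMulVec_mul_vecMulVec,
    dotProduct_single, hs, zero_smul, vecMulVec_zero, vecMulVec_add]
  abel

theorem embedTopLeft_mul_lastColUnip (X : Matrix (Fin m) (Fin m) A) (u : Fin (m + 1) → A) :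
    embedTopLeft X * lastColUnip u = lastColUnip (embedTopLeft X *ᵥ u) * embedTopLeft X := by
  rw [lastColUnip, lastColUnip, mul_add, add_mul, mul_one, one_mul, mul_vecMulVec, vecMulVec_mul,
    single_last_vecMul_embedTopLeft]

theorem lastRowUnip_mul_embedTopLeft (X : Matrix (Fin m) (Fin m) A) (t : Fin (m + 1) → A) :
    lastRowUnip t * embedTopLeft X = embedTopLeft X * lastRowUnip (t ᵥ* embedTopLeft X) := by
  rw [lastRowUnip, lastRowUnip, mul_add, add_mul, mul_one, one_mul, mul_vecMulVec, vecMulVec_mul,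
    embedTopLeft_mulVec_single_last]

theorem lastRowUnip_mul_apply_last (t : Fin (m + 1) → A) (M : Matrix (Fin (m + 1)) (Fin (m + 1)) A)
    (j : Fin (m + 1)) : (lastRowUnip t * M) (Fin.last m) j = M (Fin.last m) j + (t ᵥ* M) j := by
  simp [lastRowUnip, add_mul, vecMulVec_mul, vecMulVec_apply]

theorem mul_lastColUnip_apply_last (M : Matrix (Fin (m + 1)) (Fin (m + 1)) A) (u : Fin (m + 1) → A)
    (i : Fin (m + 1)) : (M * lastColUnip u) i (Fin.last m) = M i (Fin.last m) + (M *ᵥ u) i := by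
  simp [lastColUnip, mul_add, mul_vecMulVec, vecMulVec_apply]

theorem exists_eq_lastColUnip_mul_embedTopLeft_mul_lastRowUnip
    {M : Matrix (Fin (m + 1)) (Fin (m + 1)) A} (hM : M (Fin.last m) (Fin.last m) = 1) :
    ∃ (w t : Fin (m + 1) → A) (N : Matrix (Fin m) (Fin m) A),
      w (Fin.last m) = 0 ∧ t (Fin.last m) = 0 ∧
        M = lastColUnip w * embedTopLeft N * lastRowUnip t := by
  refine ⟨Function.update (fun i => M i (Fin.last m)) (Fin.last m) 0,
    Function.update (M (Fin.last m)) (Fin.last m) 0,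
    Matrix.of fun i j =>
      M i.castSucc j.castSucc - M i.castSucc (Fin.last m) * M (Fin.last m) j.castSucc,
    by simp, by simp, ?_⟩
  ext i j
  induction i using Fin.lastCases <;> induction j using Fin.lastCases <;>
    simp [lastColUnip, lastRowUnip, mul_apply, Fin.sum_univ_castSucc, vecMulVec_apply,
      Pi.single_apply, one_apply, (Fin.castSucc_ne_last _).symm, hM]

theorem srLE_one_of_sr_eq_one (hsr : sr A = 1) : srLE A 1 := by
  set S := {c : ℕ∞ | ∃ n : ℕ, c = (n : ℕ∞) ∧ srLE A n}
  have hS : S.Nonempty := by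
    by_contra hS
    rw [Set.not_nonempty_iff_eq_empty] at hS
    simp [sr, S, hS] at hsr
  obtain ⟨n, hn, hsrn⟩ : sInf S ∈ S := csInf_mem hS
  rw [← sr, hsr] at hn
  rwa [show n = 1 by exact_mod_cast hn.symm] at hsrn

theorem exists_isUnit_add_mul_of_srLE_one (h : srLE A 1) {a b : A} (hab : IsCoprime a b) :
    ∃ c, IsUnit (a + c * b) := by
  obtain ⟨x, y, hxy⟩ := hab
  obtain ⟨c, d, hd⟩ := h ![a, b] ⟨![x, y], by simpa using hxy⟩
  exact ⟨c 0, IsUnit.of_mul_eq_one_right (d 0) (by simpa using hd)⟩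

theorem Unimodular.exists_isUnit_last_add_dotProduct (h : srLE A 1) {v : Fin (m + 1) → A}
    (hv : Unimodular v) : ∃ c : Fin (m + 1) → A, c (Fin.last m) = 0 ∧
      IsUnit (v (Fin.last m) + c ⬝ᵥ v) := by
  obtain ⟨b, hb⟩ := hv
  rw [Fin.sum_univ_castSucc] at hb
  have hcop : IsCoprime (v (Fin.last m)) (∑ i : Fin m, b i.castSucc * v i.castSucc) :=
    ⟨b (Fin.last m), 1, by linear_combination hb⟩
  obtain ⟨x, hx⟩ := exists_isUnit_add_mul_of_srLE_one h hcop
  refine ⟨Fin.snoc (fun i => x * b i.castSucc) 0, by simp, ?_⟩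
  convert hx using 2
  simp [dotProduct, Fin.sum_univ_castSucc, Finset.mul_sum, mul_assoc]

theorem unimodular_col_of_isUnit_det {M : Matrix (Fin m) (Fin m) A} (hM : IsUnit M.det)
    (j : Fin m) : Unimodular fun i => M i j :=
  ⟨fun i => M⁻¹ j i, by rw [← mul_apply, nonsing_inv_mul M hM, one_apply_eq]⟩

theorem exists_lastRowUnip_mul_mul_lastColUnip_apply_last_last (h : srLE A 1) (hm : m ≠ 0)
    {M : Matrix (Fin (m + 1)) (Fin (m + 1)) A} (hM : IsUnit M.det) :
    ∃ c s : Fin (m + 1) → A, c (Fin.last m) = 0 ∧ s (Fin.last m) = 0 ∧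
      (lastRowUnip c * M * lastColUnip s) (Fin.last m) (Fin.last m) = 1 := by
  obtain ⟨c, hc, hu⟩ := (unimodular_col_of_isUnit_det hM 0).exists_isUnit_last_add_dotProduct h
  have hu₁ : IsUnit ((lastRowUnip c * M) (Fin.last m) 0) := by
    rwa [lastRowUnip_mul_apply_last]
  have h0 : (0 : Fin (m + 1)) ≠ Fin.last m := by
    simp [Fin.ext_iff, hm.symm]
  refine ⟨c, Pi.single 0 ((1 - (lastRowUnip c * M) (Fin.last m) (Fin.last m)) * hu₁.unit⁻¹), hc,
    by simp [h0.symm], ?_⟩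
  rw [mul_lastColUnip_apply_last, mulVec_single]
  simp only [Pi.smul_apply, col_apply, MulOpposite.smul_eq_mul_unop, MulOpposite.unop_op]
  rw [mul_left_comm, IsUnit.mul_val_inv, mul_one, add_sub_cancel]

def IsLULU (M : Matrix (Fin m) (Fin m) A) : Prop :=
  ∃ L₁ U₁ L₂ U₂ : Matrix (Fin m) (Fin m) A,
    UnipLower L₁ ∧ UnipUpper U₁ ∧ UnipLower L₂ ∧ UnipUpper U₂ ∧ M = L₁ * U₁ * L₂ * U₂

theorem isLULU_one : IsLULU (1 : Matrix (Fin m) (Fin m) A) := by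
  have hL : UnipLower (1 : Matrix (Fin m) (Fin m) A) :=
    ⟨fun _ _ h => one_apply_ne h.ne, one_apply_eq⟩
  have hU : UnipUpper (1 : Matrix (Fin m) (Fin m) A) :=
    ⟨fun _ _ h => one_apply_ne h.ne', one_apply_eq⟩
  exact ⟨1, 1, 1, 1, hL, hU, hL, hU, by simp⟩

theorem IsLULU.unipLower_mul {L M : Matrix (Fin m) (Fin m) A} (hL : UnipLower L) (hM : IsLULU M) :
    IsLULU (L * M) := by
  obtain ⟨L₁, U₁, L₂, U₂, hL₁, hU₁, hL₂, hU₂, rfl⟩ := hM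
  exact ⟨L * L₁, U₁, L₂, U₂, hL.mul hL₁, hU₁, hL₂, hU₂, by simp only [mul_assoc]⟩

theorem IsLULU.mul_unipUpper {M U : Matrix (Fin m) (Fin m) A} (hM : IsLULU M) (hU : UnipUpper U) :
    IsLULU (M * U) := by
  obtain ⟨L₁, U₁, L₂, U₂, hL₁, hU₁, hL₂, hU₂, rfl⟩ := hM
  exact ⟨L₁, U₁, L₂, U₂ * U, hL₁, hU₁, hL₂, hU₂.mul hU, by simp only [mul_assoc]⟩

theorem IsLULU.lastColUnip_mul_embedTopLeft_mul_lastRowUnip {N : Matrix (Fin m) (Fin m) A}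
    (hN : IsLULU N) {w t : Fin (m + 1) → A} (hw : w (Fin.last m) = 0) (ht : t (Fin.last m) = 0) :
    IsLULU (lastColUnip w * embedTopLeft N * lastRowUnip t) := by
  obtain ⟨L₁, U₁, L₂, U₂, hL₁, hU₁, hL₂, hU₂, rfl⟩ := hN
  have isUnit_embedTopLeft_det {X : Matrix (Fin m) (Fin m) A} (hX : X.det = 1) :
      IsUnit (embedTopLeft X) := by
    rw [isUnit_iff_isUnit_det, det_embedTopLeft, hX]
    exact isUnit_one
  obtain ⟨w', rfl⟩ := mulVec_surjective_iff_isUnit.mpr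
    (isUnit_embedTopLeft_det hL₁.det_eq_one) w
  obtain ⟨t', rfl⟩ : ∃ t', t' ᵥ* embedTopLeft U₂ = t :=
    vecMul_surjective_iff_isUnit.mpr (isUnit_embedTopLeft_det hU₂.det_eq_one) t
  rw [mulVec_embedTopLeft_last] at hw
  rw [vecMul_embedTopLeft_last] at ht
  refine ⟨embedTopLeft L₁, lastColUnip w' * embedTopLeft U₁, embedTopLeft L₂ * lastRowUnip t',
    embedTopLeft U₂, hL₁.embedTopLeft, (unipUpper_lastColUnip hw).mul hU₁.embedTopLeft,
    hL₂.embedTopLeft.mul (unipLower_lastRowUnip ht), hU₂.embedTopLeft, ?_⟩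
  simp only [embedTopLeft_mul, mul_assoc]
  rw [lastRowUnip_mul_embedTopLeft, ← mul_assoc (embedTopLeft L₁) (lastColUnip w'),
    embedTopLeft_mul_lastColUnip]
  simp only [mul_assoc]

theorem isLULU_of_apply_last_last_eq_one
    (ih : ∀ N : Matrix (Fin m) (Fin m) A, N.det = 1 → IsLULU N)
    {M : Matrix (Fin (m + 1)) (Fin (m + 1)) A} (hM : M (Fin.last m) (Fin.last m) = 1)
    (hdet : M.det = 1) : IsLULU M := by
  obtain ⟨w, t, N, hw, ht, rfl⟩ := exists_eq_lastColUnip_mul_embedTopLeft_mul_lastRowUnip hM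
  refine (ih N ?_).lastColUnip_mul_embedTopLeft_mul_lastRowUnip hw ht
  simpa [det_embedTopLeft, (unipUpper_lastColUnip hw).det_eq_one,
    (unipLower_lastRowUnip ht).det_eq_one] using hdet

theorem isLULU_of_det_eq_one (h : srLE A 1) {M : Matrix (Fin m) (Fin m) A}
    (hdet : M.det = 1) : IsLULU M := by
  induction m with
  | zero => exact Subsingleton.elim 1 M ▸ isLULU_one
  | succ n ih =>
    rcases eq_or_ne n 0 with rfl | hn
    · rw [det_fin_one] at hdet
      exact isLULU_of_apply_last_last_eq_one (fun _ => ih) hdet (by rwa [det_fin_one])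
    obtain ⟨c, s, hc, hs, hcorner⟩ :=
      exists_lastRowUnip_mul_mul_lastColUnip_apply_last_last h hn (hdet ▸ isUnit_one)
    have hc' : (-c) (Fin.last n) = 0 := by simp [hc]
    have hs' : (-s) (Fin.last n) = 0 := by simp [hs]
    have hM : M = lastRowUnip (-c) * (lastRowUnip c * M * lastColUnip s) * lastColUnip (-s) := by
      rw [← mul_assoc, ← mul_assoc, lastRowUnip_mul_lastRowUnip hc', neg_add_cancel,
        lastRowUnip_zero, one_mul, mul_assoc, lastColUnip_mul_lastColUnip _ hs', add_neg_cancel,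
        lastColUnip_zero, mul_one]
    rw [hM]
    refine ((isLULU_of_apply_last_last_eq_one (fun _ => ih) hcorner ?_).unipLower_mul
      (unipLower_lastRowUnip hc')).mul_unipUpper (unipUpper_lastColUnip hs')
    simp [hdet, (unipLower_lastRowUnip hc).det_eq_one, (unipUpper_lastColUnip hs).det_eq_one]

theorem det_eq_one_of_mem_elemSubgroup {M : Matrix (Fin m) (Fin m) A}
    (hM : M ∈ ElemSubgroup A m) : M.det = 1 := by
  induction hM using Submonoid.closure_induction with
  | mem E hE =>
    obtain ⟨i, j, a, hij, rfl⟩ := hE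
    exact det_transvection_of_ne i j hij a
  | one => exact det_one
  | mul X Y _ _ hX hY => rw [det_mul, hX, hY, one_mul]

end

theorem stmt17_general {A : Type*} [CommRing A] (hsr : sr A = 1) (n : ℕ)
    (M : Matrix (Fin n) (Fin n) A) (hM : M ∈ ElemSubgroup A n) :
    ∃ T₁ T₂ T₃ T₄ : Matrix (Fin n) (Fin n) A,
      UnipTriangular T₁ ∧ UnipTriangular T₂ ∧ UnipTriangular T₃ ∧
        UnipTriangular T₄ ∧ M = T₁ * T₂ * T₃ * T₄ := by
  obtain ⟨L₁, U₁, L₂, U₂, hL₁, hU₁, hL₂, hU₂, rfl⟩ :=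
    isLULU_of_det_eq_one (srLE_one_of_sr_eq_one hsr) (det_eq_one_of_mem_elemSubgroup hM)
  exact ⟨L₁, U₁, L₂, U₂, .inr hL₁, .inl hU₁, .inr hL₂, .inl hU₂, rfl⟩

/-- If `sr(A) = 1`, every matrix in `E_n(A)` (`n ≥ 2`) is a product of at most
four triangular unipotent matrices. -/
theorem stmt17 {A : Type*} [CommRing A] (hsr : sr A = 1) (n : ℕ)
    (hn : 2 ≤ n) (M : Matrix (Fin n) (Fin n) A) (hM : M ∈ ElemSubgroup A n) :
    ∃ T₁ T₂ T₃ T₄ : Matrix (Fin n) (Fin n) A,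
      UnipTriangular T₁ ∧ UnipTriangular T₂ ∧ UnipTriangular T₃ ∧
        UnipTriangular T₄ ∧ M = T₁ * T₂ * T₃ * T₄ :=
  stmt17_general hsr n M hM
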